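/- arXiv:2310.11809 — 4 statements merged into one kernel-verified Lean document; each statement's English description precedes it below -/
import Mathlib

section
/- Let p be a prime and G a finite p-group. Then the following three statements are equivalent: (i) the power graph P(G) is cyclically separable; (ii) ∂(G) ≥ 3; (iii) one of the following holds: (a) p > 3 and G is non-cyclic, (b) p = 3 and G has at least two maximal cyclic subgroups of order greater than 3, (c) p = 2 and either G has at least two maximal cyclic subgroups of order greater than 4, or G has at least two maximal cyclic subgroups of order greater than 2 with trivial intersection. -/
/-- The power graph of a group `G`: distinct `x, y` are adjacent iff one is a power
of the other. -/
def powerGraph (G : Type*) [Group G] : SimpleGraph G where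
  Adj x y := x ≠ y ∧ (x ∈ Subgroup.zpowers y ∨ y ∈ Subgroup.zpowers x)
  symm := ⟨fun _ _ h => ⟨h.1.symm, h.2.symm⟩⟩
  loopless := ⟨fun _ h => h.1 rfl⟩

/-- The enhanced power graph of a group `G`: distinct `x, y` are adjacent iff they
lie in a common cyclic subgroup. -/
def enhancedPowerGraph (G : Type*) [Group G] : SimpleGraph G where
  Adj x y := x ≠ y ∧ ∃ z : G, x ∈ Subgroup.zpowers z ∧ y ∈ Subgroup.zpowers z
  symm := ⟨fun _ _ h => ⟨h.1.symm, h.2.choose, h.2.choose_spec.2, h.2.choose_spec.1⟩⟩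
  loopless := ⟨fun _ h => h.1 rfl⟩

/-- A subgroup is a maximal cyclic subgroup if it is cyclic and not properly contained
in any other cyclic subgroup. -/
def IsMaximalCyclic {G : Type*} [Group G] (M : Subgroup G) : Prop :=
  (∃ x : G, M = Subgroup.zpowers x) ∧
    ∀ N : Subgroup G, (∃ y : G, N = Subgroup.zpowers y) → M ≤ N → M = N

/-- The difference number `∂(G)`: the maximum of
`min (|M \ N|, |N \ M|)` over pairs of maximal cyclic subgroups `M, N`. -/
noncomputable def diffNumber (G : Type*) [Group G] : ℕ :=
  sSup { n : ℕ | ∃ M N : Subgroup G, IsMaximalCyclic M ∧ IsMaximalCyclic N ∧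
    n = min (((M : Set G) \ (N : Set G)).ncard) (((N : Set G) \ (M : Set G)).ncard) }

/-- A graph has a cycle. -/
def HasCycle {V : Type*} (Γ : SimpleGraph V) : Prop :=
  ∃ (v : V) (w : Γ.Walk v v), w.IsCycle

/-- `S` is a cyclic vertex cutset of `Γ` if `Γ - S` is disconnected and at least two
of its connected components contain a cycle. -/
def IsCyclicVertexCutset {V : Type*} (Γ : SimpleGraph V) (S : Set V) : Prop :=
  ¬ (Γ.induce Sᶜ).Connected ∧
    ∃ u v : ↥Sᶜ, ¬ (Γ.induce Sᶜ).Reachable u v ∧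
      (∃ w : (Γ.induce Sᶜ).Walk u u, w.IsCycle) ∧
      (∃ w : (Γ.induce Sᶜ).Walk v v, w.IsCycle)

/-- A graph is cyclically separable if it has a cyclic vertex cutset. -/
def CyclicallySeparable {V : Type*} (Γ : SimpleGraph V) : Prop :=
  ∃ S : Set V, IsCyclicVertexCutset Γ S

/-- The cyclic vertex connectivity: the minimum cardinality of a cyclic vertex cutset,
`⊤ = ∞` if there is none. -/
noncomputable def cyclicVertexConnectivity {V : Type*} (Γ : SimpleGraph V) : ℕ∞ :=
  ⨅ S ∈ {S : Set V | IsCyclicVertexCutset Γ S}, (S.ncard : ℕ∞)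

/-- The vertex connectivity: the minimum number of vertices whose deletion results in a
disconnected or trivial graph. -/
noncomputable def vertexConnectivity {V : Type*} (Γ : SimpleGraph V) : ℕ :=
  sInf { n : ℕ | ∃ S : Set V, S.ncard = n ∧
    ((Sᶜ : Set V).Subsingleton ∨ ¬ (Γ.induce Sᶜ).Connected) }

/-!
In a finite `p`-group any two elements of a cyclic subgroup are powers of one another, so every
cyclic subgroup is a clique of the power graph. On a cycle of `P(G) - S`, a vertex of maximal
order has its two cycle-neighbours among its powers, so the component of the cycle meets a maximal
cyclic subgroup in at least three vertices; two components with cycles give maximal cyclic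
subgroups `M`, `N` each of whose three vertices lies outside the other, whence `∂(G) ≥ 3`.
Conversely, if `|M \ N|, |N \ M| ≥ 3`, deleting everything outside `(M \ N) ∪ (N \ M)` leaves no
edge between the two parts, and each part contains a triangle. Finally
`|M \ N| = |M| - |M ∩ N|` with `p * |M ∩ N| ≤ |M|`, which turns `∂(G) ≥ 3` into the arithmetic
conditions on `p` and the orders.
-/

namespace SimpleGraph

variable {V : Type*} {Γ : SimpleGraph V}

theorem Walk.IsCycle.exists_ne_adj_adj_le {α : Type*} [LinearOrder α] (f : V → α) {u : V}
    {w : Γ.Walk u u} (hw : w.IsCycle) :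
    ∃ c, Γ.Reachable u c ∧ ∃ a b, a ≠ b ∧ Γ.Adj c a ∧ Γ.Adj c b ∧ f a ≤ f c ∧ f b ≤ f c := by
  classical
  obtain ⟨c, hc, hmax⟩ := w.support.toFinset.exists_max_image f ⟨u, by simp⟩
  rw [List.mem_toFinset] at hc
  have hw' := hw.rotate hc
  have hle (x : V) (hx : x ∈ (w.rotate c hc).support) : f x ≤ f c :=
    hmax x (List.mem_toFinset.mpr ((Walk.mem_support_rotate_iff _ _ _).mp hx))
  exact ⟨c, (w.takeUntil c hc).reachable, _, _, hw'.snd_ne_penultimate,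
    Walk.adj_snd hw'.not_nil, (Walk.adj_penultimate hw'.not_nil).symm,
    hle _ (Walk.getVert_mem_support _ _), hle _ (Walk.getVert_mem_support _ _)⟩

theorem exists_isCycle_of_adj_of_adj_of_adj {a b c : V} (hab : Γ.Adj a b) (hbc : Γ.Adj b c)
    (hca : Γ.Adj c a) : ∃ w : Γ.Walk a a, w.IsCycle :=
  ⟨.cons hab (.cons hbc (.cons hca .nil)), by
    simp [Walk.cons_isCycle_iff, hab.ne, hbc.ne, hca.ne, hab.ne.symm, hca.ne.symm]⟩

theorem IsClique.reachable_induce {K s : Set V} (hK : Γ.IsClique K) {x y : s}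
    (hx : (x : V) ∈ K) (hy : (y : V) ∈ K) : (Γ.induce s).Reachable x y := by
  obtain rfl | hxy := eq_or_ne x y
  · rfl
  · exact Adj.reachable (hK hx hy (Subtype.coe_injective.ne hxy))

theorem IsClique.exists_isCycle_induce {K s : Set V} (hK : Γ.IsClique K) (hKs : K ⊆ s)
    (h : 2 < K.ncard) : ∃ u : s, (u : V) ∈ K ∧ ∃ w : (Γ.induce s).Walk u u, w.IsCycle := by
  obtain ⟨a, b, c, ha, hb, hc, hab, hac, hbc⟩ :=
    (Set.two_lt_ncard_iff (Set.finite_of_ncard_pos (by omega))).mp h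
  exact ⟨⟨a, hKs ha⟩, ha, exists_isCycle_of_adj_of_adj_of_adj (b := ⟨b, hKs hb⟩)
    (c := ⟨c, hKs hc⟩) (hK ha hb hab) (hK hb hc hbc) (hK hc ha hac.symm)⟩

theorem IsClique.inter_subset_diff_of_not_reachable {K L s : Set V} (hK : Γ.IsClique K)
    (hL : Γ.IsClique L) {x y : s} (hx : (x : V) ∈ K) (hy : (y : V) ∈ L)
    (h : ¬ (Γ.induce s).Reachable x y) : s ∩ K ⊆ K \ L :=
  fun z ⟨hzs, hzK⟩ => ⟨hzK, fun hzL =>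
    h ((hK.reachable_induce hx (y := ⟨z, hzs⟩) hzK).trans (hL.reachable_induce hzL hy))⟩

theorem Reachable.mem_of_adj_closed {s : Set V} (hs : ∀ x y, Γ.Adj x y → x ∈ s → y ∈ s)
    {u v : V} (h : Γ.Reachable u v) (hu : u ∈ s) : v ∈ s := by
  obtain ⟨w⟩ := h
  induction w with
  | nil => exact hu
  | cons hadj _ ih => exact ih (hs _ _ hadj hu)

end SimpleGraph

section PowerGraph

open Subgroup SimpleGraph

theorem IsCyclic.mem_zpowers_of_orderOf_dvd {α : Type*} [Group α] [IsCyclic α] [Finite α]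
    {x y : α} (h : orderOf x ∣ orderOf y) : x ∈ zpowers y := by
  classical
  cases nonempty_fintype α
  -- a cyclic group has at most `d` solutions of `a ^ d = 1`, and `zpowers y` already has `d`
  have hsub : (zpowers y : Set α) ⊆ {a | a ^ orderOf y = 1} := fun a ha =>
    orderOf_dvd_iff_pow_eq_one.mp (orderOf_dvd_of_mem_zpowers ha)
  have hcard : ({a | a ^ orderOf y = 1} : Set α).ncard ≤ (zpowers y : Set α).ncard := by
    rw [Set.ncard_eq_toFinset_card', Set.toFinset_ofPred, ← Nat.card_coe_set_eq,
      SetLike.coe_sort_coe, Nat.card_zpowers]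
    exact IsCyclic.card_pow_eq_one_le (orderOf_pos y)
  rw [← SetLike.mem_coe, Set.eq_of_subset_of_ncard_le hsub hcard]
  exact orderOf_dvd_iff_pow_eq_one.mp h

variable {G : Type*} [Group G]

theorem mem_zpowers_of_orderOf_dvd [Finite G] {x y z : G} (hx : x ∈ zpowers z)
    (hy : y ∈ zpowers z) (h : orderOf x ∣ orderOf y) : x ∈ zpowers y := by
  have := IsCyclic.mem_zpowers_of_orderOf_dvd (x := (⟨x, hx⟩ : zpowers z)) (y := ⟨y, hy⟩)
    (by simpa only [orderOf_mk] using h)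
  obtain ⟨k, hk⟩ := mem_zpowers_iff.mp this
  exact mem_zpowers_iff.mpr ⟨k, by simpa using congrArg Subtype.val hk⟩

theorem mem_zpowers_of_powerGraph_adj [Finite G] {x y : G} (h : (powerGraph G).Adj x y)
    (hxy : orderOf x ≤ orderOf y) : x ∈ zpowers y := by
  rcases h.2 with h | h
  · exact h
  · have hyx := Nat.le_of_dvd (orderOf_pos x) (orderOf_dvd_of_mem_zpowers h)
    exact mem_zpowers_of_orderOf_dvd (mem_zpowers x) h (le_antisymm hxy hyx ▸ dvd_rfl)

theorem exists_isMaximalCyclic_le [Finite G] (x : G) :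
    ∃ M : Subgroup G, IsMaximalCyclic M ∧ zpowers x ≤ M := by
  obtain ⟨M, ⟨hMcyc, hxM⟩, hmax⟩ := Set.Finite.exists_maximalFor id
    {K : Subgroup G | (∃ y, K = zpowers y) ∧ zpowers x ≤ K} (Set.toFinite _) ⟨_, ⟨x, rfl⟩, le_rfl⟩
  exact ⟨M, ⟨hMcyc, fun N hN hMN => le_antisymm hMN (hmax ⟨hN, hxM.trans hMN⟩ hMN)⟩, hxM⟩

theorem IsMaximalCyclic.not_le {M N : Subgroup G} (hM : IsMaximalCyclic M)
    (hN : IsMaximalCyclic N) (hMN : M ≠ N) : ¬ M ≤ N :=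
  fun h => hMN (hM.2 N hN.1 h)

theorem not_isCyclic_iff_exists_isMaximalCyclic_ne [Finite G] :
    ¬ IsCyclic G ↔ ∃ M N : Subgroup G, IsMaximalCyclic M ∧ IsMaximalCyclic N ∧ M ≠ N := by
  constructor
  · intro hG
    obtain ⟨M, hM, -⟩ := exists_isMaximalCyclic_le (1 : G)
    obtain ⟨g, rfl⟩ := hM.1
    obtain ⟨x, hx⟩ : ∃ x, x ∉ zpowers g := by
      by_contra! h
      exact hG ⟨g, h⟩
    obtain ⟨N, hN, hxN⟩ := exists_isMaximalCyclic_le x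
    exact ⟨_, N, hM, hN, fun h => hx (h ▸ hxN (mem_zpowers x))⟩
  · rintro ⟨M, N, hM, hN, hMN⟩ ⟨g, hg⟩
    have hle (K : Subgroup G) : K ≤ zpowers g := fun x _ => hg x
    exact hMN ((hM.2 _ ⟨g, rfl⟩ (hle M)).trans (hN.2 _ ⟨g, rfl⟩ (hle N)).symm)

theorem ncard_diff_eq_card_sub_card_inf [Finite G] (H K : Subgroup G) :
    ((H : Set G) \ K).ncard = Nat.card H - Nat.card (H ⊓ K : Subgroup G) := by
  rw [← Set.sdiff_inter_self_eq_sdiff, ← coe_inf, inf_comm,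
    Set.ncard_sdiff (by simp [coe_inf]), ← Nat.card_coe_set_eq, ← Nat.card_coe_set_eq]
  rfl

theorem le_diffNumber_iff [Finite G] (n : ℕ) :
    n ≤ diffNumber G ↔ ∃ M N : Subgroup G, IsMaximalCyclic M ∧ IsMaximalCyclic N ∧
      n ≤ ((M : Set G) \ N).ncard ∧ n ≤ ((N : Set G) \ M).ncard := by
  set D := { n : ℕ | ∃ M N : Subgroup G, IsMaximalCyclic M ∧ IsMaximalCyclic N ∧
    n = min (((M : Set G) \ N).ncard) (((N : Set G) \ M).ncard) }
  have hbdd : BddAbove D := by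
    refine ⟨Nat.card G, ?_⟩
    rintro _ ⟨M, N, -, -, rfl⟩
    exact (min_le_left _ _).trans ((Set.ncard_le_ncard (Set.subset_univ _)).trans_eq
      (Set.ncard_univ G))
  constructor
  · intro h
    obtain ⟨M, hM, -⟩ := exists_isMaximalCyclic_le (1 : G)
    obtain ⟨M, N, hM, hN, hmin⟩ := Nat.sSup_mem (⟨_, M, M, hM, hM, rfl⟩ : D.Nonempty) hbdd
    exact ⟨M, N, hM, hN, le_min_iff.mp (hmin ▸ h)⟩
  · rintro ⟨M, N, hM, hN, hMN, hNM⟩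
    exact (le_min hMN hNM).trans (le_csSup hbdd ⟨M, N, hM, hN, rfl⟩)

theorem le_diffNumber_iff_card [Finite G] {n : ℕ} (hn : n ≠ 0) :
    n ≤ diffNumber G ↔ ∃ M N : Subgroup G, IsMaximalCyclic M ∧ IsMaximalCyclic N ∧ M ≠ N ∧
      Nat.card (M ⊓ N : Subgroup G) + n ≤ Nat.card M ∧
      Nat.card (M ⊓ N : Subgroup G) + n ≤ Nat.card N := by
  simp only [le_diffNumber_iff, ncard_diff_eq_card_sub_card_inf]
  refine exists₂_congr fun M N => and_congr_right fun _ => and_congr_right fun _ => ?_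
  rw [inf_comm N M]
  have hle := card_le_of_le (inf_le_left : M ⊓ N ≤ M)
  have hle' := card_le_of_le (inf_le_right : M ⊓ N ≤ N)
  constructor
  · rintro ⟨hM, hN⟩
    refine ⟨?_, by omega, by omega⟩
    rintro rfl
    rw [inf_idem] at hM
    omega
  · rintro ⟨-, hM, hN⟩
    omega

theorem not_reachable_induce_powerGraph_symmDiff (H K : Subgroup G)
    {x y : ↥(((H : Set G) \ K) ∪ ((K : Set G) \ H))} (hx : (x : G) ∈ H) (hy : (y : G) ∉ H) :
    ¬ ((powerGraph G).induce (((H : Set G) \ K) ∪ ((K : Set G) \ H))).Reachable x y := by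
  refine fun h => hy (h.mem_of_adj_closed
    (s := {z : ↥(((H : Set G) \ K) ∪ ((K : Set G) \ H)) | (z : G) ∈ H}) ?_ hx)
  -- an edge from `H \ K` to `K \ H` would make a power of an element of one subgroup leave it
  rintro a ⟨b, (hb | hb)⟩ hab (ha : (a : G) ∈ H)
  · exact hb.1
  · exfalso
    rcases (induce_adj.mp hab).2 with h | h
    · exact (a.2.resolve_right fun h' => h'.2 ha).2 (zpowers_le.mpr hb.1 h)
    · exact hb.2 (zpowers_le.mpr ha h)

theorem exists_isMaximalCyclic_of_isCycle [Finite G] {s : Set G} {u : s}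
    {w : ((powerGraph G).induce s).Walk u u} (hw : w.IsCycle) :
    ∃ M : Subgroup G, IsMaximalCyclic M ∧ 2 < (s ∩ M).ncard ∧
      ∃ c : s, (c : G) ∈ M ∧ ((powerGraph G).induce s).Reachable u c := by
  obtain ⟨c, huc, a, b, hab, hca, hcb, ha, hb⟩ :=
    hw.exists_ne_adj_adj_le fun x : s => orderOf (x : G)
  obtain ⟨M, hM, hcM⟩ := exists_isMaximalCyclic_le (c : G)
  have hmem {x : s} (hcx : ((powerGraph G).induce s).Adj c x)
      (hx : orderOf (x : G) ≤ orderOf (c : G)) : (x : G) ∈ s ∩ M :=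
    ⟨x.2, hcM (mem_zpowers_of_powerGraph_adj (induce_adj.mp hcx.symm) hx)⟩
  refine ⟨M, hM, (Set.two_lt_ncard_iff (Set.toFinite _)).mpr ⟨a, b, c, hmem hca ha, hmem hcb hb,
    ⟨c.2, hcM (mem_zpowers _)⟩, Subtype.coe_injective.ne hab, Subtype.coe_injective.ne hca.ne',
    Subtype.coe_injective.ne hcb.ne'⟩, c, hcM (mem_zpowers _), huc⟩

section PGroup

variable {p : ℕ} (hp : p.Prime) (hG : IsPGroup p G) [Finite G]
include hp hG

theorem IsPGroup.mem_zpowers_or_mem_zpowers {x y z : G} (hx : x ∈ zpowers z)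
    (hy : y ∈ zpowers z) : x ∈ zpowers y ∨ y ∈ zpowers x := by
  have := Fact.mk hp
  obtain ⟨i, hi⟩ := IsPGroup.iff_orderOf.mp hG x
  obtain ⟨j, hj⟩ := IsPGroup.iff_orderOf.mp hG y
  rcases le_total i j with hij | hij
  · exact .inl (mem_zpowers_of_orderOf_dvd hx hy (hi ▸ hj ▸ pow_dvd_pow p hij))
  · exact .inr (mem_zpowers_of_orderOf_dvd hy hx (hi ▸ hj ▸ pow_dvd_pow p hij))

theorem IsPGroup.isClique_powerGraph_of_eq_zpowers {M : Subgroup G}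
    (hM : ∃ g, M = zpowers g) : (powerGraph G).IsClique (M : Set G) := by
  obtain ⟨g, rfl⟩ := hM
  exact fun _ hx _ hy hxy => ⟨hxy, hG.mem_zpowers_or_mem_zpowers hp hx hy⟩

theorem IsPGroup.mul_card_inf_le {H K : Subgroup G} (h : ¬ H ≤ K) :
    p * Nat.card (H ⊓ K : Subgroup G) ≤ Nat.card H := by
  have := Fact.mk hp
  obtain ⟨b, hb⟩ := IsPGroup.iff_card.mp (hG.to_subgroup H)
  obtain ⟨a, hab, ha⟩ := (Nat.dvd_prime_pow hp).mp (hb ▸ card_dvd_of_le inf_le_left)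
  have hne : a ≠ b := by
    rintro rfl
    exact h (inf_eq_left.mp (eq_of_le_of_card_ge inf_le_left (by rw [ha, hb])))
  calc p * Nat.card (H ⊓ K : Subgroup G) = p ^ (a + 1) := by rw [ha, pow_succ']
    _ ≤ p ^ b := Nat.pow_le_pow_right hp.pos (by omega)
    _ = Nat.card H := hb.symm

theorem IsPGroup.mul_card_inf_le_of_isMaximalCyclic {M N : Subgroup G} (hM : IsMaximalCyclic M)
    (hN : IsMaximalCyclic N) (hMN : M ≠ N) :
    p * Nat.card (M ⊓ N : Subgroup G) ≤ Nat.card M ∧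
      p * Nat.card (M ⊓ N : Subgroup G) ≤ Nat.card N :=
  ⟨hG.mul_card_inf_le hp (hM.not_le hN hMN),
    inf_comm N M ▸ hG.mul_card_inf_le hp (hN.not_le hM hMN.symm)⟩

theorem IsPGroup.sq_le_card_of_lt (h : p < Nat.card G) : p ^ 2 ≤ Nat.card G := by
  have := Fact.mk hp
  obtain ⟨n, hn⟩ := IsPGroup.iff_card.mp hG
  rw [hn] at h ⊢
  exact Nat.pow_le_pow_right hp.pos ((Nat.pow_lt_pow_iff_right hp.one_lt).mp (by simpa using h))

theorem IsPGroup.three_le_diffNumber_iff_of_three_lt (hp3 : 3 < p) :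
    3 ≤ diffNumber G ↔ ¬ IsCyclic G := by
  rw [le_diffNumber_iff_card three_ne_zero, not_isCyclic_iff_exists_isMaximalCyclic_ne]
  refine exists₂_congr fun M N => ⟨fun ⟨hM, hN, hMN, _⟩ => ⟨hM, hN, hMN⟩, ?_⟩
  rintro ⟨hM, hN, hMN⟩
  obtain ⟨hkM, hkN⟩ := hG.mul_card_inf_le_of_isMaximalCyclic hp hM hN hMN
  have hk : 4 * Nat.card (M ⊓ N : Subgroup G) ≤ p * Nat.card (M ⊓ N : Subgroup G) :=
    Nat.mul_le_mul_right _ hp3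
  have := Nat.card_pos (α := (M ⊓ N : Subgroup G))
  exact ⟨hM, hN, hMN, by omega, by omega⟩

theorem IsPGroup.three_le_diffNumber_of_cyclicallySeparable
    (h : CyclicallySeparable (powerGraph G)) : 3 ≤ diffNumber G := by
  obtain ⟨S, -, u, v, huv, ⟨wu, hwu⟩, ⟨wv, hwv⟩⟩ := h
  obtain ⟨M, hM, hsM, c, hcM, huc⟩ := exists_isMaximalCyclic_of_isCycle hwu
  obtain ⟨N, hN, hsN, f, hfN, hvf⟩ := exists_isMaximalCyclic_of_isCycle hwv
  have hcf : ¬ ((powerGraph G).induce Sᶜ).Reachable c f :=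
    fun hcf => huv ((huc.trans hcf).trans hvf.symm)
  have hMc := hG.isClique_powerGraph_of_eq_zpowers hp hM.1
  have hNc := hG.isClique_powerGraph_of_eq_zpowers hp hN.1
  refine (le_diffNumber_iff 3).mpr ⟨M, N, hM, hN, ?_, ?_⟩
  · exact hsM.trans_le (Set.ncard_le_ncard
      (hMc.inter_subset_diff_of_not_reachable hNc hcM hfN hcf) (Set.toFinite _))
  · exact hsN.trans_le (Set.ncard_le_ncard
      (hNc.inter_subset_diff_of_not_reachable hMc hfN hcM (mt Reachable.symm hcf))
      (Set.toFinite _))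

theorem IsPGroup.cyclicallySeparable_of_three_le_diffNumber (h : 3 ≤ diffNumber G) :
    CyclicallySeparable (powerGraph G) := by
  obtain ⟨M, N, hM, hN, hMN, hNM⟩ := (le_diffNumber_iff 3).mp h
  obtain ⟨u, hu, hcu⟩ := ((hG.isClique_powerGraph_of_eq_zpowers hp hM.1).subset
    Set.sdiff_subset).exists_isCycle_induce Set.subset_union_left hMN
  obtain ⟨v, hv, hcv⟩ := ((hG.isClique_powerGraph_of_eq_zpowers hp hN.1).subset
    Set.sdiff_subset).exists_isCycle_induce Set.subset_union_right hNM
  have huv := not_reachable_induce_powerGraph_symmDiff M N hu.1 hv.2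
  refine ⟨(((M : Set G) \ N) ∪ ((N : Set G) \ M))ᶜ, ?_⟩
  rw [IsCyclicVertexCutset, compl_compl]
  exact ⟨fun hD => huv (hD.preconnected u v), u, v, huv, hcu, hcv⟩

theorem IsPGroup.cyclicallySeparable_powerGraph_iff :
    CyclicallySeparable (powerGraph G) ↔ 3 ≤ diffNumber G :=
  ⟨hG.three_le_diffNumber_of_cyclicallySeparable hp,
    hG.cyclicallySeparable_of_three_le_diffNumber hp⟩

end PGroup

theorem IsPGroup.three_le_diffNumber_iff_of_eq_three [Finite G] (hG : IsPGroup 3 G) :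
    3 ≤ diffNumber G ↔ ∃ M N : Subgroup G, IsMaximalCyclic M ∧ IsMaximalCyclic N ∧ M ≠ N ∧
      3 < Nat.card M ∧ 3 < Nat.card N := by
  rw [le_diffNumber_iff_card three_ne_zero]
  refine exists₂_congr fun M N => and_congr_right fun hM => and_congr_right fun hN =>
    and_congr_right fun hMN => ?_
  obtain ⟨hkM, hkN⟩ := hG.mul_card_inf_le_of_isMaximalCyclic Nat.prime_three hM hN hMN
  have := Nat.card_pos (α := (M ⊓ N : Subgroup G))
  omega

theorem IsPGroup.three_le_diffNumber_iff_of_eq_two [Finite G] (hG : IsPGroup 2 G) :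
    3 ≤ diffNumber G ↔
      (∃ M N : Subgroup G, IsMaximalCyclic M ∧ IsMaximalCyclic N ∧ M ≠ N ∧
          4 < Nat.card M ∧ 4 < Nat.card N) ∨
        (∃ M N : Subgroup G, IsMaximalCyclic M ∧ IsMaximalCyclic N ∧ M ≠ N ∧
          2 < Nat.card M ∧ 2 < Nat.card N ∧ M ⊓ N = ⊥) := by
  rw [le_diffNumber_iff_card three_ne_zero]
  constructor
  · rintro ⟨M, N, hM, hN, hMN, hkM, hkN⟩
    have := Nat.card_pos (α := (M ⊓ N : Subgroup G))
    by_cases hbig : 4 < Nat.card M ∧ 4 < Nat.card N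
    · exact .inl ⟨M, N, hM, hN, hMN, hbig⟩
    · exact .inr ⟨M, N, hM, hN, hMN, by omega, by omega, card_eq_one.mp (by omega)⟩
  · rintro (⟨M, N, hM, hN, hMN, hM4, hN4⟩ | ⟨M, N, hM, hN, hMN, hM2, hN2, hk⟩)
    · obtain ⟨hkM, hkN⟩ := hG.mul_card_inf_le_of_isMaximalCyclic Nat.prime_two hM hN hMN
      exact ⟨M, N, hM, hN, hMN, by omega, by omega⟩
    · have hM4 := (hG.to_subgroup M).sq_le_card_of_lt Nat.prime_two hM2
      have hN4 := (hG.to_subgroup N).sq_le_card_of_lt Nat.prime_two hN2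
      have hk1 := card_eq_one.mpr hk
      exact ⟨M, N, hM, hN, hMN, by omega, by omega⟩

end PowerGraph

/-- Theorem 1.1: characterization of finite p-groups whose power graphs are
cyclically separable. -/
theorem power_graph_cyclically_separable_tfae
    (p : ℕ) (hp : p.Prime) (G : Type*) [Group G] [Finite G] (hG : IsPGroup p G) :
    List.TFAE [
      CyclicallySeparable (powerGraph G),
      3 ≤ diffNumber G,
      (3 < p ∧ ¬ IsCyclic G) ∨
      (p = 3 ∧ ∃ M N : Subgroup G, IsMaximalCyclic M ∧ IsMaximalCyclic N ∧ M ≠ N ∧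
        3 < Nat.card M ∧ 3 < Nat.card N) ∨
      (p = 2 ∧ ((∃ M N : Subgroup G, IsMaximalCyclic M ∧ IsMaximalCyclic N ∧ M ≠ N ∧
          4 < Nat.card M ∧ 4 < Nat.card N) ∨
        (∃ M N : Subgroup G, IsMaximalCyclic M ∧ IsMaximalCyclic N ∧ M ≠ N ∧
          2 < Nat.card M ∧ 2 < Nat.card N ∧ M ⊓ N = ⊥)))] := by
  tfae_have 1 ↔ 2 := hG.cyclicallySeparable_powerGraph_iff hp
  tfae_have 2 ↔ 3 := by
    obtain hp3 | rfl | rfl : 3 < p ∨ p = 3 ∨ p = 2 := by have := hp.two_le; omega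
    · have hp2 : p ≠ 2 := by omega
      simp [hG.three_le_diffNumber_iff_of_three_lt hp hp3, hp3, hp3.ne', hp2]
    · simp [hG.three_le_diffNumber_iff_of_eq_three]
    · simp [hG.three_le_diffNumber_iff_of_eq_two]
  tfae_finish
end

section
/- For any finite group G, if ∂(G) ≥ 3, then the power graph P(G) is cyclically separable. -/
/-!
Pick maximal cyclic subgroups `M = ⟨x⟩` and `N = ⟨y⟩` with `|M \ N|, |N \ M| ≥ 3`. An element
of `M \ N` is never a power of an element of `N \ M` (that would put it in `N`), nor conversely,
so removing everything outside `(M \ N) ∪ (N \ M)` leaves the two differences disconnected from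
each other. Each of them carries a triangle `x, x⁻¹, c`: the generators `x` and `x⁻¹` of `M` lie
in `M \ N`, are distinct because `|M| ≥ 3`, and are adjacent to every other element of `M`.
-/

namespace SimpleGraph

variable {V : Type*} {Γ : SimpleGraph V}

theorem Walk.isCycle_triangle {a b c : V} (hab : Γ.Adj a b) (hbc : Γ.Adj b c) (hca : Γ.Adj c a) :
    (Walk.cons hab (Walk.cons hbc (Walk.cons hca Walk.nil))).IsCycle := by
  simp [Walk.cons_isCycle_iff, hab.ne, hbc.ne, hca.ne, hab.ne.symm, hca.ne.symm]

theorem exists_isCycle_induce_of_isNClique_three {s : Finset V} {t : Set V}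
    (hs : Γ.IsNClique 3 s) (hst : (s : Set V) ⊆ t) :
    ∃ u : t, (u : V) ∈ s ∧ ∃ w : (Γ.induce t).Walk u u, w.IsCycle := by
  classical
  obtain ⟨a, b, c, hab, hac, hbc, rfl⟩ := is3Clique_iff.1 hs
  simp only [Finset.coe_insert, Finset.coe_singleton, Set.insert_subset_iff,
    Set.singleton_subset_iff] at hst
  obtain ⟨ha, hb, hc⟩ := hst
  refine ⟨⟨a, ha⟩, by simp, _, Walk.isCycle_triangle (a := (⟨a, ha⟩ : t))
    (b := (⟨b, hb⟩ : t)) (c := (⟨c, hc⟩ : t)) hab hbc hac.symm⟩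

theorem not_reachable_induce_union {A B : Set V} (hAB : Disjoint A B)
    (hadj : ∀ a ∈ A, ∀ b ∈ B, ¬ Γ.Adj a b) {u v : ↥(A ∪ B)} (hu : (u : V) ∈ A)
    (hv : (v : V) ∈ B) : ¬ (Γ.induce (A ∪ B)).Reachable u v := by
  rintro ⟨p⟩
  obtain ⟨d, -, hd, hd'⟩ :=
    p.exists_boundary_dart {w | (w : V) ∈ A} hu (hAB.notMem_of_mem_right hv)
  exact hadj _ hd _ (d.snd.2.resolve_left hd') d.adj

theorem isCyclicVertexCutset_compl_union {A B : Set V} (hAB : Disjoint A B)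
    (hadj : ∀ a ∈ A, ∀ b ∈ B, ¬ Γ.Adj a b) {s t : Finset V} (hsA : (s : Set V) ⊆ A)
    (hs : Γ.IsNClique 3 s) (htB : (t : Set V) ⊆ B) (ht : Γ.IsNClique 3 t) :
    IsCyclicVertexCutset Γ (A ∪ B)ᶜ := by
  rw [IsCyclicVertexCutset, compl_compl]
  obtain ⟨u, hu, hcu⟩ :=
    exists_isCycle_induce_of_isNClique_three hs (hsA.trans Set.subset_union_left)
  obtain ⟨v, hv, hcv⟩ :=
    exists_isCycle_induce_of_isNClique_three ht (htB.trans Set.subset_union_right)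
  have huv := not_reachable_induce_union hAB hadj (hsA hu) (htB hv)
  exact ⟨fun h => huv (h.preconnected u v), u, v, huv, hcu, hcv⟩

end SimpleGraph

section PowerGraph

variable {G : Type*} [Group G]

theorem powerGraph_adj_of_mem_zpowers {g h : G} (hne : g ≠ h) (hh : h ∈ Subgroup.zpowers g) :
    (powerGraph G).Adj g h :=
  ⟨hne, Or.inr hh⟩

theorem powerGraph_not_adj_of_mem_sdiff {M N : Subgroup G} {a b : G}
    (ha : a ∈ (M : Set G) \ N) (hb : b ∈ (N : Set G) \ M) : ¬ (powerGraph G).Adj a b := by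
  rintro ⟨-, hab | hba⟩
  · exact ha.2 (Subgroup.zpowers_le.2 hb.1 hab)
  · exact hb.2 (Subgroup.zpowers_le.2 ha.1 hba)

theorem exists_isNClique_three_subset_zpowers_sdiff (x : G) (N : Subgroup G)
    (h : 3 ≤ ((Subgroup.zpowers x : Set G) \ N).ncard) :
    ∃ s : Finset G, (s : Set G) ⊆ (Subgroup.zpowers x : Set G) \ N ∧
      (powerGraph G).IsNClique 3 s := by
  classical
  have hxN : x ∉ N := fun hx => by
    rw [Set.sdiff_eq_empty.2 (Subgroup.zpowers_le.2 hx), Set.ncard_empty] at h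
    omega
  have hinv : x ≠ x⁻¹ := fun hx => by
    have hx2 : x ^ 2 = 1 := by rw [pow_two, ← eq_inv_iff_mul_eq_one, ← hx]
    have hfin : (Subgroup.zpowers x : Set G).Finite :=
      (isOfFinOrder_iff_pow_eq_one.2 ⟨2, two_pos, hx2⟩).finite_zpowers
    have hle := Set.ncard_le_ncard (Set.sdiff_subset (t := (N : Set G))) hfin
    rw [← Nat.card_coe_set_eq (Subgroup.zpowers x : Set G), SetLike.coe_sort_coe,
      Nat.card_zpowers] at hle
    have := orderOf_le_of_pow_eq_one two_pos hx2
    omega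
  obtain ⟨c, hc, hcx⟩ := Set.exists_mem_notMem_of_ncard_lt_ncard
    (s := {x, x⁻¹}) (t := (Subgroup.zpowers x : Set G) \ N) (by rw [Set.ncard_pair hinv]; omega)
  simp only [Set.mem_insert_iff, Set.mem_singleton_iff, not_or] at hcx
  refine ⟨{x, x⁻¹, c}, ?_, SimpleGraph.is3Clique_triple_iff.2 ⟨?_, ?_, ?_⟩⟩
  · have hxinv : x⁻¹ ∈ (Subgroup.zpowers x : Set G) \ N :=
      ⟨inv_mem (Subgroup.mem_zpowers x), fun h => hxN (by simpa using inv_mem h)⟩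
    simp [Set.insert_subset_iff, hxinv, hc, hxN]
  · exact powerGraph_adj_of_mem_zpowers hinv (inv_mem (Subgroup.mem_zpowers x))
  · exact powerGraph_adj_of_mem_zpowers (Ne.symm hcx.1) hc.1
  · exact powerGraph_adj_of_mem_zpowers (Ne.symm hcx.2) (by rw [Subgroup.zpowers_inv]; exact hc.1)

theorem exists_isMaximalCyclic_le_ncard_sdiff [Finite G] {n : ℕ} (hn : 0 < n)
    (h : n ≤ diffNumber G) :
    ∃ M N : Subgroup G, IsMaximalCyclic M ∧ IsMaximalCyclic N ∧
      n ≤ ((M : Set G) \ N).ncard ∧ n ≤ ((N : Set G) \ M).ncard := by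
  set S := { n : ℕ | ∃ M N : Subgroup G, IsMaximalCyclic M ∧ IsMaximalCyclic N ∧
    n = min (((M : Set G) \ (N : Set G)).ncard) (((N : Set G) \ (M : Set G)).ncard) } with hS
  have hbdd : BddAbove S := by
    refine ⟨Nat.card G, ?_⟩
    rintro _ ⟨M, N, -, -, rfl⟩
    exact (min_le_left _ _).trans (Set.ncard_le_card _)
  have hne : S.Nonempty := Set.nonempty_iff_ne_empty.2 fun hS' => by
    rw [diffNumber, ← hS, hS', csSup_empty] at h
    exact hn.not_ge h
  obtain ⟨M, N, hM, hN, hMN⟩ := Nat.sSup_mem hne hbdd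
  rw [diffNumber, ← hS, hMN, le_min_iff] at h
  exact ⟨M, N, hM, hN, h⟩

end PowerGraph

/-- Lemma 2.3: for any finite group `G`, if `∂(G) ≥ 3` then `P(G)` is cyclically
separable. -/
theorem cyclically_separable_of_diffNumber_ge_three
    (G : Type*) [Group G] [Finite G] (h : 3 ≤ diffNumber G) :
    CyclicallySeparable (powerGraph G) := by
  obtain ⟨M, N, ⟨⟨x, rfl⟩, -⟩, ⟨⟨y, rfl⟩, -⟩, hxy, hyx⟩ :=
    exists_isMaximalCyclic_le_ncard_sdiff three_pos h
  obtain ⟨s, hs, hs3⟩ := exists_isNClique_three_subset_zpowers_sdiff x _ hxy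
  obtain ⟨t, ht, ht3⟩ := exists_isNClique_three_subset_zpowers_sdiff y _ hyx
  exact ⟨_, SimpleGraph.isCyclicVertexCutset_compl_union disjoint_sdiff_sdiff
    (fun _ ha _ hb => powerGraph_not_adj_of_mem_sdiff ha hb) hs hs3 ht ht3⟩
end

section
/- Let p be a prime and G a finite p-group. Then ∂(G) ≥ 3 holds if G satisfies one of the following conditions: (a) p > 3 and G is non-cyclic; (b) p = 3 and G has at least two maximal cyclic subgroups of order greater than 3; (c) p = 2 and either G has at least two maximal cyclic subgroups of order greater than 4, or G has at least two maximal cyclic subgroups of order greater than 2 with trivial intersection. -/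
/-!
Two distinct maximal cyclic subgroups `M, N` of a `p`-group meet in a proper subgroup of each, so
`|M ∩ N|` is at most `|M| / p` and `|N| / p`; hence `|M \ N| ≥ (p - 1) |M ∩ N|` and likewise for
`N`. For `p ≥ 5` this is already `≥ 4`; for `p ∈ {2, 3}` the size conditions on `M` and `N`
(a `2`-group of order `> 2` has order `≥ 4`) force the differences up to `3`.
-/

namespace IsPGroup

variable {p : ℕ} [Fact p.Prime] {G : Type*} [Group G] [Finite G]

theorem pow_succ_le_card_of_pow_lt (hG : IsPGroup p G) {k : ℕ} (h : p ^ k < Nat.card G) :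
    p ^ (k + 1) ≤ Nat.card G := by
  obtain ⟨n, hn⟩ := hG.exists_card_eq
  rw [hn] at h ⊢
  exact Nat.pow_le_pow_right (Fact.out : p.Prime).pos
    ((Nat.pow_lt_pow_iff_right (Fact.out : p.Prime).one_lt).1 h)

theorem mul_card_le_card_of_lt (hG : IsPGroup p G) {H K : Subgroup G} (hHK : H < K) :
    p * Nat.card H ≤ Nat.card K := by
  obtain ⟨a, ha⟩ := (hG.to_subgroup H).exists_card_eq
  have hlt : Nat.card H < Nat.card K := lt_of_le_of_ne (Subgroup.card_le_of_le hHK.le)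
    fun h ↦ hHK.ne (Subgroup.eq_of_le_of_card_ge hHK.le h.ge)
  rw [ha] at hlt ⊢
  rw [← pow_succ']
  exact (hG.to_subgroup K).pow_succ_le_card_of_pow_lt hlt

end IsPGroup

section MaximalCyclic

variable {G : Type*} [Group G]

theorem IsMaximalCyclic.inf_lt_left {M N : Subgroup G} (hM : IsMaximalCyclic M)
    (hN : ∃ y, N = Subgroup.zpowers y) (hMN : M ≠ N) : M ⊓ N < M :=
  inf_le_left.lt_of_ne fun h ↦ hMN (hM.2 N hN (h ▸ inf_le_right))

theorem exists_isMaximalCyclic_mem [Finite G] (x : G) : ∃ M, IsMaximalCyclic M ∧ x ∈ M := by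
  obtain ⟨M, hxM, ⟨hM, hmax⟩⟩ := Finite.exists_le_maximal
    (p := fun N : Subgroup G ↦ ∃ y, N = Subgroup.zpowers y) ⟨x, rfl⟩
  exact ⟨M, ⟨hM, fun N hN hMN ↦ le_antisymm hMN (hmax hN hMN)⟩,
    hxM (Subgroup.mem_zpowers x)⟩

theorem exists_isMaximalCyclic_ne_of_not_isCyclic [Finite G] (hG : ¬ IsCyclic G) :
    ∃ M N : Subgroup G, IsMaximalCyclic M ∧ IsMaximalCyclic N ∧ M ≠ N := by
  obtain ⟨M, hM, -⟩ := exists_isMaximalCyclic_mem (1 : G)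
  obtain ⟨x, hx⟩ : ∃ x, x ∉ M := by
    by_contra! hall
    obtain ⟨y, rfl⟩ := hM.1
    exact hG ⟨y, hall⟩
  obtain ⟨N, hN, hxN⟩ := exists_isMaximalCyclic_mem x
  exact ⟨M, N, hM, hN, fun h ↦ hx (h ▸ hxN)⟩

theorem Subgroup.ncard_coe_sdiff [Finite G] (M N : Subgroup G) :
    ((M : Set G) \ N).ncard = Nat.card M - Nat.card (M ⊓ N : Subgroup G) := by
  have h := Set.ncard_inter_add_ncard_sdiff_eq_ncard (M : Set G) N
  rw [← Subgroup.coe_inf] at h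
  change Nat.card (M ⊓ N : Subgroup G) + _ = Nat.card M at h
  omega

theorem min_card_sub_card_inf_le_diffNumber [Finite G] {M N : Subgroup G}
    (hM : IsMaximalCyclic M) (hN : IsMaximalCyclic N) :
    min (Nat.card M - Nat.card (M ⊓ N : Subgroup G)) (Nat.card N - Nat.card (M ⊓ N : Subgroup G))
      ≤ diffNumber G := by
  rw [← Subgroup.ncard_coe_sdiff M N, inf_comm M N, ← Subgroup.ncard_coe_sdiff N M]
  refine le_csSup ⟨Nat.card G, ?_⟩ ⟨M, N, hM, hN, rfl⟩
  rintro _ ⟨A, B, -, -, rfl⟩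
  exact (min_le_left _ _).trans (Set.ncard_le_card _)

theorem IsPGroup.mul_card_inf_le_card_of_isMaximalCyclic {p : ℕ} [Fact p.Prime] [Finite G]
    (hG : IsPGroup p G) {M N : Subgroup G} (hM : IsMaximalCyclic M) (hN : IsMaximalCyclic N)
    (hMN : M ≠ N) :
    p * Nat.card (M ⊓ N : Subgroup G) ≤ Nat.card M ∧
      p * Nat.card (M ⊓ N : Subgroup G) ≤ Nat.card N :=
  ⟨hG.mul_card_le_card_of_lt (hM.inf_lt_left hN.1 hMN),
    inf_comm N M ▸ hG.mul_card_le_card_of_lt (hN.inf_lt_left hM.1 hMN.symm)⟩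

end MaximalCyclic

/-- Lemma 2.4: sufficient conditions on a finite p-group for `∂(G) ≥ 3`. -/
theorem diffNumber_ge_three_of_conditions
    (p : ℕ) (hp : p.Prime) (G : Type*) [Group G] [Finite G] (hG : IsPGroup p G)
    (h : (3 < p ∧ ¬ IsCyclic G) ∨
      (p = 3 ∧ ∃ M N : Subgroup G, IsMaximalCyclic M ∧ IsMaximalCyclic N ∧ M ≠ N ∧
        3 < Nat.card M ∧ 3 < Nat.card N) ∨
      (p = 2 ∧ ((∃ M N : Subgroup G, IsMaximalCyclic M ∧ IsMaximalCyclic N ∧ M ≠ N ∧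
          4 < Nat.card M ∧ 4 < Nat.card N) ∨
        (∃ M N : Subgroup G, IsMaximalCyclic M ∧ IsMaximalCyclic N ∧ M ≠ N ∧
          2 < Nat.card M ∧ 2 < Nat.card N ∧ M ⊓ N = ⊥)))) :
    3 ≤ diffNumber G := by
  have := Fact.mk hp
  suffices ∃ M N : Subgroup G, IsMaximalCyclic M ∧ IsMaximalCyclic N ∧
      3 ≤ Nat.card M - Nat.card (M ⊓ N : Subgroup G) ∧
      3 ≤ Nat.card N - Nat.card (M ⊓ N : Subgroup G) by
    obtain ⟨M, N, hM, hN, hMd, hNd⟩ := this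
    exact (le_min hMd hNd).trans (min_card_sub_card_inf_le_diffNumber hM hN)
  rcases h with ⟨hp3, hnc⟩ | ⟨rfl, M, N, hM, hN, hMN, hM3, hN3⟩ |
    ⟨rfl, ⟨M, N, hM, hN, hMN, hM4, hN4⟩ | ⟨M, N, hM, hN, hMN, hM2, hN2, hbot⟩⟩
  · obtain ⟨M, N, hM, hN, hMN⟩ := exists_isMaximalCyclic_ne_of_not_isCyclic hnc
    obtain ⟨hMd, hNd⟩ := hG.mul_card_inf_le_card_of_isMaximalCyclic hM hN hMN
    have hd : 0 < Nat.card (M ⊓ N : Subgroup G) := Nat.card_pos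
    have := Nat.mul_le_mul_right (Nat.card (M ⊓ N : Subgroup G)) hp3
    exact ⟨M, N, hM, hN, by omega, by omega⟩
  · obtain ⟨hMd, hNd⟩ := hG.mul_card_inf_le_card_of_isMaximalCyclic hM hN hMN
    exact ⟨M, N, hM, hN, by omega, by omega⟩
  · obtain ⟨hMd, hNd⟩ := hG.mul_card_inf_le_card_of_isMaximalCyclic hM hN hMN
    exact ⟨M, N, hM, hN, by omega, by omega⟩
  · have hM4 := (hG.to_subgroup M).pow_succ_le_card_of_pow_lt (k := 1) hM2
    have hN4 := (hG.to_subgroup N).pow_succ_le_card_of_pow_lt (k := 1) hN2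
    refine ⟨M, N, hM, hN, ?_⟩
    rw [hbot, Subgroup.card_bot]
    omega
end

section
/- Let p be a prime, G a finite p-group, and M1, ..., Mr (r ≥ 2) maximal cyclic subgroups of G such that Mi ∩ Mj is nontrivial for all i ≠ j. Then all the Mi share a common subgroup of order p, and the subgraph of the power graph P(G) induced by (M1 ∪ M2 ∪ ... ∪ Mr) \ {e} is connected. -/
/-!
A cyclic `p`-group has a unique subgroup of order `p`, and it lies in the subgroup generated
by any nontrivial element. Take `h` of order `p` in `M₁ ∩ M₂`. Every `Mᵢ` meets `M₁`
nontrivially, so `Mᵢ` contains `h`; then `h` is a power of every nontrivial element of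
`M₁ ∪ ⋯ ∪ Mᵣ`, and the induced power graph is a star centred at `h`.
-/

open Subgroup

theorem IsCyclic.subgroup_eq_of_natCard_eq {α : Type*} [Group α] [Finite α] [IsCyclic α]
    {H K : Subgroup α} (hcard : Nat.card H = Nat.card K) : H = K := by
  classical
  have := Fintype.ofFinite α
  let roots : Finset α := {x | x ^ Nat.card K = 1}
  have hroots : roots.card ≤ Nat.card K := IsCyclic.card_pow_eq_one_le Nat.card_pos
  -- a subgroup of order `n` lies in the `≤ n` solutions of `x ^ n = 1`, so it is all of them
  have eq_roots : ∀ L : Subgroup α, Nat.card L = Nat.card K → (L : Set α) = roots := by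
    intro L hL
    refine Set.eq_of_subset_of_ncard_le (fun x hx => ?_) ?_ roots.finite_toSet
    · have : (⟨x, hx⟩ : L) ^ Nat.card K = 1 := hL ▸ pow_card_eq_one'
      simpa [roots] using congrArg Subtype.val this
    · rwa [Set.ncard_coe_finset, ← Nat.card_coe_set_eq, SetLike.coe_sort_coe, hL]
  exact SetLike.coe_injective ((eq_roots H hcard).trans (eq_roots K rfl).symm)

theorem zpowers_eq_zpowers_of_orderOf_eq {G : Type*} [Group G] {a b c : G}
    (hc : IsOfFinOrder c) (ha : a ∈ zpowers c) (hb : b ∈ zpowers c)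
    (hab : orderOf a = orderOf b) : zpowers a = zpowers b := by
  have : Finite (zpowers c) := hc.finite_zpowers
  have key : zpowers (⟨a, ha⟩ : zpowers c) = zpowers ⟨b, hb⟩ :=
    IsCyclic.subgroup_eq_of_natCard_eq (by simp only [Nat.card_zpowers, orderOf_mk, hab])
  simpa only [MonoidHom.map_zpowers, coe_subtype] using congrArg (map (zpowers c).subtype) key

theorem IsPGroup.orderOf_pow_orderOf_div_eq {p : ℕ} [Fact p.Prime] {G : Type*} [Group G]
    (hG : IsPGroup p G) {x : G} (hx : x ≠ 1) : orderOf (x ^ (orderOf x / p)) = p :=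
  orderOf_pow_orderOf_div (hG.isOfFinOrder (Fact.out : p.Prime).ne_zero x).orderOf_pos.ne'
    (hG.dvd_orderOf hx)

theorem IsPGroup.mem_zpowers_of_orderOf_eq_prime {p : ℕ} [Fact p.Prime] {G : Type*} [Group G]
    (hG : IsPGroup p G) {c x y : G} (hx : x ∈ zpowers c) (hx1 : x ≠ 1) (hy : y ∈ zpowers c)
    (hy_order : orderOf y = p) : y ∈ zpowers x := by
  have hpow : x ^ (orderOf x / p) ∈ zpowers c := pow_mem hx _
  have hzp : zpowers y = zpowers (x ^ (orderOf x / p)) :=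
    zpowers_eq_zpowers_of_orderOf_eq (hG.isOfFinOrder (Fact.out : p.Prime).ne_zero c) hy hpow
      (hy_order.trans (hG.orderOf_pow_orderOf_div_eq hx1).symm)
  exact zpowers_le.2 (pow_mem (mem_zpowers x) _) (hzp ▸ mem_zpowers y)

theorem SimpleGraph.connected_of_forall_adj {V : Type*} (Γ : SimpleGraph V) (v : V)
    (hv : ∀ w, w ≠ v → Γ.Adj v w) : Γ.Connected := by
  refine Γ.connected_iff_exists_forall_reachable.2 ⟨v, fun w => ?_⟩
  by_cases hw : w = v
  · exact hw ▸ Reachable.refl w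
  · exact (hv w hw).reachable

theorem pairwise_nontrivial_intersection_common_subgroup_connected_general
    (p : ℕ) (hp : p.Prime) (G : Type*) [Group G] (hG : IsPGroup p G)
    (r : ℕ) (hr : 2 ≤ r) (M : Fin r → Subgroup G)
    (hmax : ∀ i, IsMaximalCyclic (M i))
    (hint : ∀ i j, i ≠ j → M i ⊓ M j ≠ ⊥) :
    (∃ H : Subgroup G, Nat.card H = p ∧ ∀ i, H ≤ M i) ∧
    ((powerGraph G).induce ((⋃ i, (M i : Set G)) \ {1})).Connected := by
  have := Fact.mk hp
  choose g hg using fun i => (hmax i).1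
  have hcyc : ∀ i, ∀ x ∈ M i, x ∈ zpowers (g i) := fun i x hx => hg i ▸ hx
  obtain ⟨i₀, i₁, hi₁⟩ : ∃ i₀ i₁ : Fin r, i₁ ≠ i₀ :=
    ⟨⟨0, by omega⟩, ⟨1, by omega⟩, by simp [Fin.ext_iff]⟩
  have hi₀ : ∀ i, i ≠ i₀ → ∃ w ∈ M i₀ ⊓ M i, w ≠ 1 := fun i hi =>
    (bot_or_exists_ne_one _).resolve_left (hint _ i (Ne.symm hi))
  obtain ⟨z, hz, hz1⟩ := hi₀ i₁ hi₁
  set h := z ^ (orderOf z / p)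
  have horder : orderOf h = p := hG.orderOf_pow_orderOf_div_eq hz1
  have h_mem_zpowers : ∀ i, h ∈ M i → ∀ x ∈ M i, x ≠ 1 → h ∈ zpowers x := fun i hh x hx hx1 =>
    hG.mem_zpowers_of_orderOf_eq_prime (hcyc i x hx) hx1 (hcyc i h hh) horder
  have hmem : ∀ i, h ∈ M i := by
    have hh₀ : h ∈ M i₀ := pow_mem hz.1 _
    intro i
    by_cases hi : i = i₀
    · exact hi ▸ hh₀
    · obtain ⟨w, hw, hw1⟩ := hi₀ i hi
      exact zpowers_le.2 hw.2 (h_mem_zpowers i₀ hh₀ w hw.1 hw1)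
  refine ⟨⟨zpowers h, by rw [Nat.card_zpowers, horder], fun i => zpowers_le.2 (hmem i)⟩, ?_⟩
  have hh1 : h ≠ 1 := fun e => hp.one_lt.ne' (by rw [← horder, e, orderOf_one])
  refine SimpleGraph.connected_of_forall_adj _ ⟨h, Set.mem_iUnion.2 ⟨i₀, hmem i₀⟩, hh1⟩ ?_
  rintro ⟨x, hxM, hx1⟩ hxh
  obtain ⟨i, hx⟩ := Set.mem_iUnion.1 hxM
  exact ⟨fun e => hxh (Subtype.ext e.symm), Or.inl (h_mem_zpowers i (hmem i) x hx hx1)⟩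

/-- If `M₁, …, Mᵣ` (`r ≥ 2`) are maximal cyclic subgroups of a finite p-group with
pairwise nontrivial intersections, then they share a common subgroup of order `p`,
and the subgraph of `P(G)` induced by `(M₁ ∪ ⋯ ∪ Mᵣ) \ {e}` is connected. -/
theorem pairwise_nontrivial_intersection_common_subgroup_connected
    (p : ℕ) (hp : p.Prime) (G : Type*) [Group G] [Finite G] (hG : IsPGroup p G)
    (r : ℕ) (hr : 2 ≤ r) (M : Fin r → Subgroup G)
    (hmax : ∀ i, IsMaximalCyclic (M i))
    (hint : ∀ i j, i ≠ j → M i ⊓ M j ≠ ⊥) :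
    (∃ H : Subgroup G, Nat.card H = p ∧ ∀ i, H ≤ M i) ∧
    ((powerGraph G).induce ((⋃ i, (M i : Set G)) \ {1})).Connected :=
  pairwise_nontrivial_intersection_common_subgroup_connected_general p hp G hG r hr M hmax hint
end
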